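/- Let x = x_ℓ⋯x_1 and y = y_1⋯y_m be reduced words in F_k of lengths ℓ ≥ 1 and m ≥ 1. Then for all n ≥ ℓ + m + 2, all 0 ≤ r ≤ ℓ and all 0 ≤ s ≤ m: μ(r,s,n;x,y) = ν_{n−r−s}(σ_r(x), τ_s(y)). -/

import Mathlib

/-!
Common setup: `Fk k` is the free group `F_k` on `k` generators; letters of the
alphabet `S_k = {g_1,…,g_k,g_1⁻¹,…,g_k⁻¹}` are encoded as pairs in `Fin k × Bool`
(`(i, true)` is `g_{i+1}`, `(i, false)` is `g_{i+1}⁻¹`); `wlen u` is the length of the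
unique reduced word representing `u`; `words k n` is the (finite) set of elements of
length `n`; `w k n` is `w_n`, the sum of all reduced words of length `n` in the group
algebra `ℂ[F_k] = MonoidAlgebra ℂ (Fk k)`.
-/

open scoped BigOperators

noncomputable section

abbrev Fk (k : ℕ) := FreeGroup (Fin k)

/-- The length `|u|` of the unique reduced word representing `u`. -/
def wlen {k : ℕ} (u : Fk k) : ℕ := (FreeGroup.toWord u).length

/-- The `Finset` of all elements of `F_k` whose reduced word has length `n`,
realized as the images of the reduced lists of letters of length `n`. -/
def words (k n : ℕ) : Finset (Fk k) :=
  (Finset.univ.filter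
      (fun v : List.Vector (Fin k × Bool) n => FreeGroup.reduce v.toList = v.toList)).image
    (fun v => FreeGroup.mk v.toList)

/-- `w_n`: the sum of all reduced words of length `n` in the group algebra `ℂ[F_k]`. -/
def w (k n : ℕ) : MonoidAlgebra ℂ (Fk k) :=
  ∑ u ∈ words k n, MonoidAlgebra.of ℂ (Fk k) u

/-- The first letter of the reduced word representing `u` (if any). -/
def firstLetter {k : ℕ} (u : Fk k) : Option (Fin k × Bool) := (FreeGroup.toWord u).head?

/-- The last letter of the reduced word representing `u` (if any). -/
def lastLetter {k : ℕ} (u : Fk k) : Option (Fin k × Bool) := (FreeGroup.toWord u).getLast?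

/-- The inverse of a letter. -/
def linv {k : ℕ} (a : Fin k × Bool) : Fin k × Bool := (a.1, !a.2)

/-- The set of reduced words of length `n` beginning with the letter `x` and ending with
the letter `y`. -/
def wordsXY (k n : ℕ) (x y : Fin k × Bool) : Finset (Fk k) :=
  (words k n).filter (fun u => firstLetter u = some x ∧ lastLetter u = some y)

/-- `ν_n(x,y)`: the number of reduced words of length `n` beginning with `x`, ending with `y`. -/
def nu (k n : ℕ) (x y : Fin k × Bool) : ℕ := (wordsXY k n x y).card

/-- `w_n(x,y)`: the sum of all reduced words of length `n` beginning with `x` and ending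
with `y`, in `ℂ[F_k]`. -/
def wXY (k n : ℕ) (x y : Fin k × Bool) : MonoidAlgebra ℂ (Fk k) :=
  ∑ u ∈ wordsXY k n x y, MonoidAlgebra.of ℂ (Fk k) u

/-- `ν_n(σ,τ)`: the number of reduced words of length `n` whose first letter lies in `σ`
and whose last letter lies in `τ`. -/
def nuS (k n : ℕ) (σ τ : Finset (Fin k × Bool)) : ℕ :=
  ((words k n).filter
    (fun u => (∃ a ∈ σ, firstLetter u = some a) ∧ (∃ b ∈ τ, lastLetter u = some b))).card

/-- The inner product `⟨a,b⟩ = Σ_g a_g conj(b_g)` on a group algebra. -/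
def inn {Γ : Type*} [Group Γ] (a b : MonoidAlgebra ℂ Γ) : ℂ :=
  ∑ g ∈ a.coeff.support, a.coeff g * (starRingEnd ℂ) (b.coeff g)

/-- `‖a‖₂² = ⟨a,a⟩ = Σ_g |a_g|²`. -/
def n2sq {Γ : Type*} [Group Γ] (a : MonoidAlgebra ℂ Γ) : ℝ :=
  ∑ g ∈ a.coeff.support, Complex.normSq (a.coeff g)

/-- `‖a‖₂ = ⟨a,a⟩^{1/2}`. -/
def n2 {Γ : Type*} [Group Γ] (a : MonoidAlgebra ℂ Γ) : ℝ := Real.sqrt (n2sq a)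

/-- The conditional expectation onto the Laplacian masa, restricted to `ℂ[F_k]`:
`E(a) = Σ_{n ≥ 0} (⟨a,w_n⟩ / ‖w_n‖₂²) w_n` (a finite sum for each `a`). -/
def Ee {k : ℕ} (a : MonoidAlgebra ℂ (Fk k)) : MonoidAlgebra ℂ (Fk k) :=
  ∑ᶠ n : ℕ, (inn a (w k n) / (n2sq (w k n) : ℂ)) • w k n

/-- The letter `x_j` of a reduced word `x = x_ℓ ⋯ x_1` of length `ℓ` (indices as in the
paper: `x_ℓ` is the first letter of `x` and `x_1` is the last one, so `x_j` is the entry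
at position `ℓ - j` of the list of letters of `x`). -/
def xLetter {k : ℕ} (x : Fk k) (j : ℕ) : Option (Fin k × Bool) :=
  (FreeGroup.toWord x)[(FreeGroup.toWord x).length - j]?

/-- The letter `y_j` of a reduced word `y = y_1 ⋯ y_m` (here `y_1` is the first letter of
`y` and `y_m` the last one). -/
def yLetter {k : ℕ} (y : Fk k) (j : ℕ) : Option (Fin k × Bool) :=
  (FreeGroup.toWord y)[j - 1]?

/-- `σ_r(x)`: for `x = x_ℓ ⋯ x_1` this is `S_k ∖ {x_{r+1}⁻¹, x_r}`, where the element
`x_{r+1}⁻¹` is omitted when `r = ℓ`, and `x_r` is omitted when `r = 0`.  In particular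
`σ_0(x) = S_k ∖ {x_1⁻¹}` and `σ_ℓ(x) = S_k ∖ {x_ℓ}`. -/
def sigmaF {k : ℕ} (x : Fk k) (r : ℕ) : Finset (Fin k × Bool) :=
  Finset.univ \
    ((if r < (FreeGroup.toWord x).length then xLetter x (r + 1) else none).toFinset.image linv ∪
      (if 0 < r then xLetter x r else none).toFinset)

/-- `τ_s(y)`: for `y = y_1 ⋯ y_m` this is `S_k ∖ {y_{s+1}⁻¹, y_s}`, where the element
`y_{s+1}⁻¹` is omitted when `s = m`, and `y_s` is omitted when `s = 0`.  In particular
`τ_0(y) = S_k ∖ {y_1⁻¹}` and `τ_m(y) = S_k ∖ {y_m}`. -/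
def tauF {k : ℕ} (y : Fk k) (s : ℕ) : Finset (Fin k × Bool) :=
  Finset.univ \
    ((if s < (FreeGroup.toWord y).length then yLetter y (s + 1) else none).toFinset.image linv ∪
      (if 0 < s then yLetter y s else none).toFinset)

/-- `μ(r,s,n;x,y)`: the number of reduced words `u` of length `n` such that in the
product `x·u·y` exactly `r` cancellations occur on the left and exactly `s` occur on the
right, i.e. `|xu| = |x| + n − 2r` and `|uy| = n + |y| − 2s`. -/
def mu (k r s n : ℕ) (x y : Fk k) : ℕ :=
  ((words k n).filter (fun u =>
    wlen (x * u) = wlen x + n - 2 * r ∧ wlen (u * y) = n + wlen y - 2 * s)).card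


/-!
Write `U = P V Q` for the reduced word of `u`. Exactly `r` letters cancel in `x u` iff `U` begins
with the inverse `P` of the last `r` letters of `x` and the surviving part of `x` meets the rest
of `U` without further cancellation; symmetrically on the right with the inverse `Q` of the
first `s` letters of `y`. As `n > r + s`, `P` and `Q` do not overlap, and the conditions on `U`
say exactly that `V` is reduced of length `n - r - s`, that its first letter cancels neither
against `x_{r+1}` nor against the last letter `x_r⁻¹` of `P` (i.e. lies in `σ_r(x)`), and dually
that its last letter lies in `τ_s(y)`. So `v ↦ mk P * v * mk Q` maps the words counted by `ν`
bijectively onto those counted by `μ`.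
-/

namespace FreeGroup

variable {α : Type*} {L L₁ L₂ L₃ : List (α × Bool)}

def NoCancel (L₁ L₂ : List (α × Bool)) : Prop :=
  ∀ a ∈ L₁.getLast?, ∀ b ∈ L₂.head?, a.1 = b.1 → a.2 = b.2

theorem isReduced_append_iff :
    IsReduced (L₁ ++ L₂) ↔ IsReduced L₁ ∧ IsReduced L₂ ∧ NoCancel L₁ L₂ :=
  List.isChain_append

theorem isReduced_append_append_iff (h₂ : L₂ ≠ []) :
    IsReduced (L₁ ++ L₂ ++ L₃) ↔
      IsReduced L₁ ∧ IsReduced L₂ ∧ IsReduced L₃ ∧ NoCancel L₁ L₂ ∧ NoCancel L₂ L₃ := by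
  rw [isReduced_append_iff, isReduced_append_iff]
  unfold NoCancel
  rw [List.getLast?_append_of_ne_nil _ h₂]
  tauto

theorem noCancel_singleton_right_iff {a : α × Bool} :
    NoCancel L [a] ↔ ∀ c ∈ L.getLast?, c.1 = a.1 → c.2 = a.2 := by
  simp [NoCancel]

theorem noCancel_singleton_left_iff {a : α × Bool} :
    NoCancel [a] L ↔ ∀ c ∈ L.head?, c.1 = a.1 → c.2 = a.2 := by
  simp only [NoCancel, List.getLast?_singleton, Option.mem_some_iff, forall_eq']
  grind

variable [DecidableEq α]

theorem IsReduced.invRev (h : IsReduced L) : IsReduced (invRev L) := by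
  rw [isReduced_iff_reduce_eq] at h ⊢
  rw [reduce_invRev, h]

theorem reduce_append_invRev_append (A W B : List (α × Bool)) :
    reduce (A ++ W ++ (invRev W ++ B)) = reduce (A ++ B) :=
  reduce.sound <| by simp only [← mul_mk, ← inv_mk, mul_assoc, mul_inv_cancel_left]

theorem exists_reduce_append_eq {X U : List (α × Bool)} (hX : IsReduced X) (hU : IsReduced U) :
    ∃ A W B, X = A ++ W ∧ U = invRev W ++ B ∧ reduce (X ++ U) = A ++ B := by
  induction X using List.reverseRecOn generalizing U with
  | nil => exact ⟨[], [], U, rfl, rfl, isReduced_iff_reduce_eq.1 hU⟩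
  | append_singleton X a ih =>
    rcases U with _ | ⟨b, U⟩
    · exact ⟨X ++ [a], [], [], by simp, rfl, by simpa using isReduced_iff_reduce_eq.1 hX⟩
    by_cases hb : b = (a.1, !a.2)
    · subst hb
      obtain ⟨A, W, B, rfl, rfl, hred⟩ :=
        ih (hX.infix (List.prefix_append _ _).isInfix) (hU.infix (List.suffix_cons _ _).isInfix)
      refine ⟨A, W ++ [a], B, by simp, by simp [invRev], ?_⟩
      rw [← hred]
      have : A ++ W ++ [a] ++ (a.1, !a.2) :: (invRev W ++ B) =
          A ++ W ++ (a.1, a.2) :: (a.1, !a.2) :: (invRev W ++ B) := by simp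
      exact this ▸ reduce.Step.eq Red.Step.not
    · refine ⟨X ++ [a], [], b :: U, by simp, rfl, isReduced_iff_reduce_eq.1 ?_⟩
      refine isReduced_append_iff.2 ⟨hX, hU, ?_⟩
      simp only [NoCancel, List.getLast?_concat, List.head?_cons, Option.mem_some_iff]
      rintro _ rfl _ rfl h
      cases a; cases b; simp_all
theorem length_reduce_append_add_iff {X U : List (α × Bool)} (hX : IsReduced X)
    (hU : IsReduced U) (r : ℕ) :
    (reduce (X ++ U)).length + 2 * r = X.length + U.length ↔
      ∃ A W B, X = A ++ W ∧ U = invRev W ++ B ∧ W.length = r ∧ IsReduced (A ++ B) := by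
  constructor
  · obtain ⟨A, W, B, rfl, rfl, hred⟩ := exists_reduce_append_eq hX hU
    intro hlen
    refine ⟨A, W, B, rfl, rfl, ?_, ?_⟩
    · simp only [hred, List.length_append, invRev_length] at hlen
      omega
    · rw [← hred]
      exact isReduced_iff_reduce_eq.2 reduce.idem
  · rintro ⟨A, W, B, rfl, rfl, rfl, hAB⟩
    rw [reduce_append_invRev_append, isReduced_iff_reduce_eq.1 hAB]
    simp only [List.length_append, invRev_length]
    omega

theorem length_toWord_mul_add_iff_left {x u : FreeGroup α} {A W : List (α × Bool)}
    (hx : x.toWord = A ++ W) :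
    (x * u).toWord.length + 2 * W.length = x.toWord.length + u.toWord.length ↔
      ∃ B, u.toWord = invRev W ++ B ∧ IsReduced (A ++ B) := by
  rw [toWord_mul, length_reduce_append_add_iff isReduced_toWord isReduced_toWord, hx]
  constructor
  · rintro ⟨A', W', B, h, hu, hW, hAB⟩
    obtain ⟨rfl, rfl⟩ := List.append_inj' h hW.symm
    exact ⟨B, hu, hAB⟩
  · rintro ⟨B, hu, hAB⟩
    exact ⟨A, W, B, rfl, hu, rfl, hAB⟩

theorem length_toWord_mul_add_iff_right {u y : FreeGroup α} {E D : List (α × Bool)}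
    (hy : y.toWord = E ++ D) :
    (u * y).toWord.length + 2 * E.length = u.toWord.length + y.toWord.length ↔
      ∃ C, u.toWord = C ++ invRev E ∧ IsReduced (C ++ D) := by
  rw [toWord_mul, length_reduce_append_add_iff isReduced_toWord isReduced_toWord, hy]
  constructor
  · rintro ⟨C, W, B, hu, h, hW, hCB⟩
    obtain ⟨rfl, rfl⟩ := List.append_inj h (by simp [hW])
    exact ⟨C, by rwa [invRev_invRev], hCB⟩
  · rintro ⟨C, hu, hCD⟩
    exact ⟨C, invRev E, D, hu, by rw [invRev_invRev], invRev_length, hCD⟩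

theorem length_toWord_mul_add_iff {x u y : FreeGroup α} {A W E D : List (α × Bool)}
    (hx : x.toWord = A ++ W) (hy : y.toWord = E ++ D)
    (hu : W.length + E.length ≤ u.toWord.length) :
    (x * u).toWord.length + 2 * W.length = x.toWord.length + u.toWord.length ∧
        (u * y).toWord.length + 2 * E.length = u.toWord.length + y.toWord.length ↔
      ∃ V, u.toWord = invRev W ++ V ++ invRev E ∧ IsReduced (A ++ V ++ invRev E) ∧
        IsReduced (invRev W ++ V ++ D) := by
  rw [length_toWord_mul_add_iff_left hx, length_toWord_mul_add_iff_right hy]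
  constructor
  · rintro ⟨⟨B, hB, hAB⟩, ⟨C, hC, hCD⟩⟩
    rw [hB] at hC hu
    obtain ⟨V, rfl, rfl⟩ : ∃ V, C = invRev W ++ V ∧ B = V ++ invRev E := by
      rcases List.append_eq_append_iff.1 hC with ⟨V, hC, hB⟩ | ⟨V, hW, hE⟩
      · exact ⟨V, hC, hB⟩
      · have hV : V = [] := by
          apply List.eq_nil_of_length_eq_zero
          have := congrArg List.length hE
          simp only [List.length_append, invRev_length] at this hu
          omega
        subst hV
        exact ⟨[], by simpa using hW.symm, by simpa using hE.symm⟩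
    exact ⟨V, by rw [hB, List.append_assoc], by simpa using hAB, hCD⟩
  · rintro ⟨V, hU, hAV, hVD⟩
    exact ⟨⟨V ++ invRev E, by simpa using hU, by simpa using hAV⟩, ⟨invRev W ++ V, hU, hVD⟩⟩

theorem isReduced_middle_iff {A W E D V : List (α × Bool)} (hAW : IsReduced (A ++ W))
    (hED : IsReduced (E ++ D)) (hV : V ≠ []) :
    IsReduced (invRev W ++ V ++ invRev E) ∧ IsReduced (A ++ V ++ invRev E) ∧
        IsReduced (invRev W ++ V ++ D) ↔
      IsReduced V ∧ NoCancel A V ∧ NoCancel (invRev W) V ∧ NoCancel V (invRev E) ∧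
        NoCancel V D := by
  have hA : IsReduced A := hAW.infix (List.prefix_append _ _).isInfix
  have hW : IsReduced (invRev W) := (hAW.infix (List.suffix_append _ _).isInfix).invRev
  have hE : IsReduced (invRev E) := (hED.infix (List.prefix_append _ _).isInfix).invRev
  have hD : IsReduced D := hED.infix (List.suffix_append _ _).isInfix
  simp only [isReduced_append_append_iff hV]
  tauto

theorem length_toWord_mul_add_iff_exists_mul_mul {x y u : FreeGroup α}
    {A W E D : List (α × Bool)} (hx : x.toWord = A ++ W) (hy : y.toWord = E ++ D) {N : ℕ}
    (hN : N ≠ 0) :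
    u.toWord.length = W.length + N + E.length ∧
        (x * u).toWord.length + 2 * W.length = x.toWord.length + u.toWord.length ∧
        (u * y).toWord.length + 2 * E.length = u.toWord.length + y.toWord.length ↔
      ∃ v : FreeGroup α, (v.toWord.length = N ∧ NoCancel A v.toWord ∧
        NoCancel (invRev W) v.toWord ∧ NoCancel v.toWord (invRev E) ∧ NoCancel v.toWord D) ∧
        mk (invRev W) * v * mk (invRev E) = u := by
  have hAW : IsReduced (A ++ W) := hx ▸ isReduced_toWord
  have hED : IsReduced (E ++ D) := hy ▸ isReduced_toWord
  constructor
  · rintro ⟨hu, hcancel⟩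
    obtain ⟨V, hU, hred⟩ := (length_toWord_mul_add_iff hx hy (by omega)).1 hcancel
    have hV : V.length = N := by
      simp only [hU, List.length_append, invRev_length] at hu
      omega
    obtain ⟨hVred, hJ⟩ := (isReduced_middle_iff hAW hED (List.ne_nil_of_length_pos (by omega))).1
      ⟨hU ▸ isReduced_toWord, hred⟩
    refine ⟨mk V, ?_, by rw [mul_mk, mul_mk, ← hU, mk_toWord]⟩
    rw [toWord_mk, hVred.reduce_eq]
    exact ⟨hV, hJ⟩
  · rintro ⟨v, ⟨hv, hJ⟩, rfl⟩
    obtain ⟨hU, hred⟩ :=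
      (isReduced_middle_iff hAW hED (List.ne_nil_of_length_pos (by omega))).2
        ⟨isReduced_toWord, hJ⟩
    have hu : (mk (invRev W) * v * mk (invRev E)).toWord = invRev W ++ v.toWord ++ invRev E := by
      rw [← hU.reduce_eq, ← toWord_mk, ← mul_mk, ← mul_mk, mk_toWord]
    have hlen : (mk (invRev W) * v * mk (invRev E)).toWord.length = W.length + N + E.length := by
      simp only [hu, List.length_append, invRev_length, hv]
    exact ⟨hlen, (length_toWord_mul_add_iff hx hy (by omega)).2 ⟨v.toWord, hu, hred⟩⟩

end FreeGroup

open FreeGroup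

theorem mem_words {k n : ℕ} {u : Fk k} : u ∈ words k n ↔ wlen u = n := by
  simp only [words, Finset.mem_image, Finset.mem_filter, Finset.mem_univ, true_and]
  constructor
  · rintro ⟨v, hv, rfl⟩
    rw [wlen, toWord_mk, hv, v.toList_length]
  · intro h
    exact ⟨⟨u.toWord, h⟩, reduce_toWord u, mk_toWord⟩

theorem linv_linv {k : ℕ} (a : Fin k × Bool) : linv (linv a) = a := by
  simp [linv]

theorem imp_iff_ne_linv {k : ℕ} {a c : Fin k × Bool} :
    (c.1 = a.1 → c.2 = a.2) ↔ a ≠ linv c := by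
  obtain ⟨i, b⟩ := a
  obtain ⟨j, d⟩ := c
  cases b <;> cases d <;> simp [linv, eq_comm]

theorem mem_univ_sdiff_image_linv_union_iff {k : ℕ} {a : Fin k × Bool}
    {o₁ o₂ : Option (Fin k × Bool)} :
    a ∈ Finset.univ \ (o₁.toFinset.image linv ∪ o₂.toFinset) ↔
      (∀ c ∈ o₁, c.1 = a.1 → c.2 = a.2) ∧ ∀ c ∈ o₂.map linv, c.1 = a.1 → c.2 = a.2 := by
  cases o₁ <;> cases o₂ <;> simp [imp_iff_ne_linv, linv_linv]

theorem mem_sigmaF_iff {k : ℕ} {x : Fk k} {r : ℕ} {a : Fin k × Bool} :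
    a ∈ sigmaF x r ↔ NoCancel (x.toWord.take (x.toWord.length - r)) [a] ∧
      NoCancel (invRev (x.toWord.drop (x.toWord.length - r))) [a] := by
  have h₁ : (x.toWord.take (x.toWord.length - r)).getLast? =
      if r < x.toWord.length then xLetter x (r + 1) else none := by
    rw [List.getLast?_eq_getElem?, List.getElem?_take, xLetter]
    split_ifs <;> grind
  have h₂ : (invRev (x.toWord.drop (x.toWord.length - r))).getLast? =
      (if 0 < r then xLetter x r else none).map linv := by
    rw [invRev, List.getLast?_reverse, List.head?_map, List.head?_drop, xLetter]
    split_ifs <;> first | rfl | grind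
  rw [sigmaF, mem_univ_sdiff_image_linv_union_iff, noCancel_singleton_right_iff,
    noCancel_singleton_right_iff, h₁, h₂]

theorem mem_tauF_iff {k : ℕ} {y : Fk k} {s : ℕ} (hs : s ≤ y.toWord.length)
    {b : Fin k × Bool} :
    b ∈ tauF y s ↔ NoCancel [b] (invRev (y.toWord.take s)) ∧ NoCancel [b] (y.toWord.drop s) := by
  have h₁ : (y.toWord.drop s).head? = if s < y.toWord.length then yLetter y (s + 1) else none := by
    rw [List.head?_drop, yLetter]
    split_ifs <;> grind
  have h₂ : (invRev (y.toWord.take s)).head? = (if 0 < s then yLetter y s else none).map linv := by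
    rw [invRev, List.head?_reverse, List.getLast?_map, List.getLast?_eq_getElem?,
      List.getElem?_take, List.length_take, min_eq_left hs, yLetter]
    split_ifs <;> first | rfl | grind
  rw [tauF, mem_univ_sdiff_image_linv_union_iff, noCancel_singleton_left_iff,
    noCancel_singleton_left_iff, h₁, h₂]
  tauto

theorem exists_mem_sigmaF_head?_iff {k : ℕ} {x : Fk k} {r : ℕ} {L : List (Fin k × Bool)} :
    (∃ a ∈ sigmaF x r, L.head? = some a) ↔ L ≠ [] ∧
      NoCancel (x.toWord.take (x.toWord.length - r)) L ∧
      NoCancel (invRev (x.toWord.drop (x.toWord.length - r))) L := by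
  cases L with
  | nil => simp
  | cons a L => simpa [NoCancel] using mem_sigmaF_iff

theorem exists_mem_tauF_getLast?_iff {k : ℕ} {y : Fk k} {s : ℕ} (hs : s ≤ y.toWord.length)
    {L : List (Fin k × Bool)} :
    (∃ b ∈ tauF y s, L.getLast? = some b) ↔ L ≠ [] ∧
      NoCancel L (invRev (y.toWord.take s)) ∧ NoCancel L (y.toWord.drop s) := by
  rcases L.eq_nil_or_concat with rfl | ⟨L, b, rfl⟩
  · simp
  · simpa [NoCancel] using mem_tauF_iff hs

theorem mu_eq_nuS_general (k : ℕ) (x y : Fk k) (ℓ m : ℕ)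
    (hx : wlen x = ℓ) (hy : wlen y = m)
    (n r s : ℕ) (hn : ℓ + m + 2 ≤ n) (hr : r ≤ ℓ) (hs : s ≤ m) :
    mu k r s n x y = nuS k (n - r - s) (sigmaF x r) (tauF y s) := by
  classical
  unfold wlen at hx hy
  have hxAW := (List.take_append_drop (ℓ - r) x.toWord).symm
  have hyED := (List.take_append_drop s y.toWord).symm
  have hW : (x.toWord.drop (ℓ - r)).length = r := by simp only [List.length_drop]; omega
  have hE : (y.toWord.take s).length = s := by simp only [List.length_take]; omega
  have hN : n - r - s ≠ 0 := by omega
  refine (congrArg Finset.card ?_).trans (Finset.card_image_of_injective _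
    ((mul_left_injective (mk (invRev (y.toWord.take s)))).comp
      (mul_right_injective (mk (invRev (x.toWord.drop (ℓ - r)))))))
  ext u
  simp only [Finset.mem_filter, Finset.mem_image, mem_words, wlen, firstLetter, lastLetter,
    exists_mem_sigmaF_head?_iff, exists_mem_tauF_getLast?_iff (hy ▸ hs : s ≤ y.toWord.length),
    Function.comp_apply, hx]
  constructor
  · rintro ⟨hu, hxu, huy⟩
    obtain ⟨v, ⟨hv, hAv, hPv, hvQ, hvD⟩, rfl⟩ :=
      (length_toWord_mul_add_iff_exists_mul_mul (u := u) hxAW hyED hN).1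
        ⟨by omega, by omega, by omega⟩
    have hne : v.toWord ≠ [] := List.ne_nil_of_length_pos (by omega)
    exact ⟨v, ⟨hv, ⟨hne, hAv, hPv⟩, hne, hvQ, hvD⟩, rfl⟩
  · rintro ⟨v, ⟨hv, ⟨-, hAv, hPv⟩, -, hvQ, hvD⟩, rfl⟩
    obtain ⟨hu, hxu, huy⟩ := (length_toWord_mul_add_iff_exists_mul_mul hxAW hyED hN).2
      ⟨v, ⟨hv, hAv, hPv, hvQ, hvD⟩, rfl⟩
    omega

/-- let `x = x_ℓ⋯x_1` and `y = y_1⋯y_m` be reduced words in `F_k` of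
lengths `ℓ ≥ 1` and `m ≥ 1`.  Then for all `n ≥ ℓ + m + 2`, `0 ≤ r ≤ ℓ`, `0 ≤ s ≤ m`:
`μ(r,s,n;x,y) = ν_{n−r−s}(σ_r(x), τ_s(y))`. -/
theorem mu_eq_nuS (k : ℕ) (hk : 2 ≤ k) (x y : Fk k) (ℓ m : ℕ)
    (hx : wlen x = ℓ) (hy : wlen y = m) (hℓ : 1 ≤ ℓ) (hm : 1 ≤ m)
    (n r s : ℕ) (hn : ℓ + m + 2 ≤ n) (hr : r ≤ ℓ) (hs : s ≤ m) :
    mu k r s n x y = nuS k (n - r - s) (sigmaF x r) (tauF y s) :=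
  mu_eq_nuS_general k x y ℓ m hx hy n r s hn hr hs

end
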